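/- arXiv:0809.4099 — 2 statements merged into one kernel-verified Lean document; each statement's English description precedes it below -/
import Mathlib

section
/- A map f: X → X' between median algebras is a median morphism if and only if f^{-1}(H') is a halfspace of X for every halfspace H' of X'. -/
/-!
Preimages of convex sets under a median morphism are convex, which gives one direction.
Conversely, if `f z ∉ [f x, f y]`, separate `f z` from the convex set `[f x, f y]` by a
halfspace `H'`; then `f ⁻¹' H'` is a halfspace containing `x` and `y` but not `z`, so it is not
convex. The separating halfspace is a maximal convex set `A` avoiding the point `d`: for
`w ∉ A` the join of `w` and `A` is convex, so by maximality it contains `d`, and this is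
what makes `Aᶜ` convex.
-/

structure MedianAlgebra (X : Type*) where
  interval : X → X → Set X
  ma1 : ∀ x, interval x x = {x}
  ma2 : ∀ x y, interval x y = interval y x
  ma3 : ∀ x y z, z ∈ interval x y → interval x z ⊆ interval x y
  ma4 : ∀ x y z, ∃! m, m ∈ interval x y ∧ m ∈ interval y z ∧ m ∈ interval z x

/-- A subset of a median algebra is convex if it contains the interval between
any two of its points. -/
def MedianAlgebra.IsConvex {X : Type*} (M : MedianAlgebra X) (A : Set X) : Prop :=
  ∀ x ∈ A, ∀ y ∈ A, M.interval x y ⊆ A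

/-- A halfspace is a convex set with convex complement. -/
def MedianAlgebra.IsHalfspace {X : Type*} (M : MedianAlgebra X) (H : Set X) : Prop :=
  M.IsConvex H ∧ M.IsConvex Hᶜ

/-- A median morphism is a map respecting intervals. -/
def IsMedianMorphism {X X' : Type*} (M : MedianAlgebra X) (M' : MedianAlgebra X')
    (f : X → X') : Prop :=
  ∀ x y, f '' M.interval x y ⊆ M'.interval (f x) (f y)

namespace MedianAlgebra

variable {X : Type*} (M : MedianAlgebra X)

def IsMedian (x y z m : X) : Prop :=
  m ∈ M.interval x y ∧ m ∈ M.interval y z ∧ m ∈ M.interval z x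

def join (p : X) (A : Set X) : Set X :=
  {u | ∃ m ∈ A, u ∈ M.interval p m}

variable {M} {a b d p q r u v w x y z m g : X}

theorem exists_isMedian (x y z : X) : ∃ m, M.IsMedian x y z m :=
  (M.ma4 x y z).exists

theorem IsMedian.eq {m' : X} (h : M.IsMedian x y z m) (h' : M.IsMedian x y z m') : m = m' :=
  (M.ma4 x y z).unique h h'

theorem IsMedian.rotate (h : M.IsMedian x y z m) : M.IsMedian y z x m :=
  ⟨h.2.1, h.2.2, h.1⟩

theorem mem_interval_comm (h : z ∈ M.interval x y) : z ∈ M.interval y x := by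
  rwa [M.ma2]

theorem interval_subset_interval (h : z ∈ M.interval x y) : M.interval x z ⊆ M.interval x y :=
  M.ma3 x y z h

variable (M) in
theorem left_mem_interval (x y : X) : x ∈ M.interval x y := by
  obtain ⟨m, hxx, hxy, -⟩ := M.exists_isMedian x x y
  rw [M.ma1, Set.mem_singleton_iff] at hxx
  exact hxx ▸ hxy

variable (M) in
theorem right_mem_interval (x y : X) : y ∈ M.interval x y :=
  mem_interval_comm (M.left_mem_interval y x)

theorem eq_of_mem_interval_of_mem_interval (hx : x ∈ M.interval y z) (hy : y ∈ M.interval x z) :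
    x = y :=
  IsMedian.eq (x := x) (y := y) (z := z)
    ⟨M.left_mem_interval x y, hx, M.right_mem_interval z x⟩
    ⟨M.right_mem_interval x y, M.left_mem_interval y z, mem_interval_comm hy⟩

theorem mem_interval_of_mem_interval (hz : z ∈ M.interval x y) (hw : w ∈ M.interval x z) :
    z ∈ M.interval w y := by
  obtain ⟨m, hwy, hyz, hzw⟩ := M.exists_isMedian w y z
  have hwxy : w ∈ M.interval x y := interval_subset_interval hz hw
  have hxy : m ∈ M.interval x y :=
    mem_interval_comm (interval_subset_interval (mem_interval_comm hwxy) (mem_interval_comm hwy))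
  have hzx : m ∈ M.interval z x := interval_subset_interval (mem_interval_comm hw) hzw
  have : m = z :=
    IsMedian.eq ⟨hxy, hyz, hzx⟩ ⟨hz, M.right_mem_interval y z, M.left_mem_interval z x⟩
  exact this ▸ hwy

/-- Moving `u ∈ [a, b]` first towards `a` and then towards `b` along `[u, w]` ends at the
median of `a`, `b`, `w`, and keeps `w` between the moving point and `v`. -/
theorem mem_interval_of_isMedian (hu : u ∈ M.interval a b) (hw : w ∈ M.interval u v)
    (hm : M.IsMedian a b w m) : w ∈ M.interval m v := by
  obtain ⟨u₁, hau₁, hwu, hua⟩ := M.exists_isMedian a w u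
  have hw₁ : w ∈ M.interval u₁ v := mem_interval_of_mem_interval hw (mem_interval_comm hwu)
  have hu₁ : u₁ ∈ M.interval a b := interval_subset_interval hu (mem_interval_comm hua)
  obtain ⟨u₂, hbw, hwu₁, hu₁b⟩ := M.exists_isMedian b w u₁
  have hw₂ : w ∈ M.interval u₂ v :=
    mem_interval_of_mem_interval hw₁ (mem_interval_comm hwu₁)
  have hu₂ : M.IsMedian a b w u₂ :=
    ⟨mem_interval_comm
        (interval_subset_interval (mem_interval_comm hu₁) (mem_interval_comm hu₁b)),
      hbw, interval_subset_interval (mem_interval_comm hau₁) hwu₁⟩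
  exact hm.eq hu₂ ▸ hw₂

theorem isConvex_interval (a b : X) : M.IsConvex (M.interval a b) := by
  intro u hu v hv w hw
  obtain ⟨m, hm⟩ := M.exists_isMedian a b w
  have hwv : w ∈ M.interval m v := mem_interval_of_isMedian hu hw hm
  have hwm : w ∈ M.interval m m := mem_interval_of_isMedian hv (mem_interval_comm hwv) hm
  rw [M.ma1, Set.mem_singleton_iff] at hwm
  exact hwm ▸ hm.1

/-- The median of `x`, `y`, `w` is the gate of `w` in `[x, y]`. -/
theorem IsMedian.mem_interval (hg : M.IsMedian x y w g) (hr : r ∈ M.interval x y) :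
    g ∈ M.interval w r := by
  obtain ⟨k, hwr, hrg, hgw⟩ := M.exists_isMedian w r g
  have hk : M.IsMedian x y w k :=
    ⟨M.isConvex_interval x y r hr g hg.1 hrg,
      mem_interval_comm
        (interval_subset_interval (mem_interval_comm hg.2.1) (mem_interval_comm hgw)),
      interval_subset_interval hg.2.2 (mem_interval_comm hgw)⟩
  exact hk.eq hg ▸ hwr

theorem isConvex_setOf_mem_interval (p q : X) : M.IsConvex {r | q ∈ M.interval p r} := by
  intro x hx y hy r hr
  obtain ⟨g, hxy, hyq, hqx⟩ := M.exists_isMedian x y q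
  have hg : M.IsMedian x y p g :=
    ⟨hxy, interval_subset_interval (mem_interval_comm hy) hyq,
      mem_interval_comm (interval_subset_interval (mem_interval_comm hx) (mem_interval_comm hqx))⟩
  have hqg : q ∈ M.interval p g :=
    mem_interval_comm (mem_interval_of_mem_interval (mem_interval_comm hx) (mem_interval_comm hqx))
  exact interval_subset_interval (hg.mem_interval hr) hqg

theorem mem_interval_of_mem_join (hu : u ∈ M.interval p a) (hv : v ∈ M.interval p b)
    (hw : w ∈ M.interval u v) (hg : M.IsMedian a b w g) : w ∈ M.interval p g := by
  obtain ⟨m₁, hm₁⟩ := M.exists_isMedian p a w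
  obtain ⟨m₂, hm₂⟩ := M.exists_isMedian p b w
  have hw₁ : w ∈ M.interval m₁ v := mem_interval_of_isMedian hu hw hm₁
  have hw₂ : w ∈ M.interval m₂ m₁ :=
    mem_interval_of_isMedian hv (mem_interval_comm hw₁) hm₂
  exact M.isConvex_interval p g m₂ (hm₂.rotate.mem_interval hg.2.1)
    m₁ (hm₁.rotate.mem_interval (mem_interval_comm hg.2.2)) hw₂

variable {A C : Set X}

theorem IsConvex.join (hA : M.IsConvex A) (p : X) : M.IsConvex (M.join p A) := by
  rintro u ⟨a, ha, hu⟩ v ⟨b, hb, hv⟩ w hw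
  obtain ⟨g, hg⟩ := M.exists_isMedian a b w
  exact ⟨g, hA a ha b hb hg.1, mem_interval_of_mem_join hu hv hw hg⟩

theorem isConvex_sUnion_of_isChain {c : Set (Set X)} (hc : IsChain (· ⊆ ·) c)
    (h : ∀ A ∈ c, M.IsConvex A) : M.IsConvex (⋃₀ c) := by
  rintro x ⟨A, hA, hx⟩ y ⟨B, hB, hy⟩
  rcases hc.total hA hB with hAB | hBA
  · exact (h B hB x (hAB hx) y hy).trans (Set.subset_sUnion_of_mem hB)
  · exact (h A hA x hx y (hBA hy)).trans (Set.subset_sUnion_of_mem hA)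

theorem exists_maximal_isConvex (hC : M.IsConvex C) (hd : d ∉ C) :
    ∃ A, C ⊆ A ∧ Maximal (fun B => M.IsConvex B ∧ d ∉ B) A := by
  refine zorn_subset_nonempty {B | M.IsConvex B ∧ d ∉ B}
    (fun c hc hchain _ => ⟨⋃₀ c, ⟨?_, ?_⟩, fun _ => Set.subset_sUnion_of_mem⟩)
    C ⟨hC, hd⟩
  · exact isConvex_sUnion_of_isChain hchain fun A hA => (hc hA).1
  · rintro ⟨A, hA, hdA⟩
    exact (hc hA).2 hdA

theorem exists_mem_interval_of_maximal (hA : Maximal (fun B => M.IsConvex B ∧ d ∉ B) A)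
    (hne : A.Nonempty) (hw : w ∉ A) : ∃ m ∈ A, d ∈ M.interval w m := by
  by_contra hd
  have hsub : M.join w A ⊆ A :=
    hA.2 ⟨hA.1.1.join w, hd⟩ fun m hm => ⟨m, hm, M.right_mem_interval w m⟩
  obtain ⟨a, ha⟩ := hne
  exact hw (hsub ⟨a, ha, M.left_mem_interval w a⟩)

/-- With `d ∈ [x, m₁]`, `d ∈ [y, m₂]` for some `mᵢ ∈ A`, a point `z ∈ [x, y] ∩ A` would
produce a point `g ∈ A` with `d ∈ [g, z]` and `g ∈ [d, z]`, i.e. `g = d`. -/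
theorem isConvex_compl_of_maximal (hA : Maximal (fun B => M.IsConvex B ∧ d ∉ B) A)
    (hne : A.Nonempty) : M.IsConvex Aᶜ := by
  intro x hx y hy z hz hzA
  obtain ⟨hAconv, hdA⟩ := hA.1
  obtain ⟨m₁, hm₁, hd₁⟩ := exists_mem_interval_of_maximal hA hne hx
  obtain ⟨m₂, hm₂, hd₂⟩ := exists_mem_interval_of_maximal hA hne hy
  obtain ⟨μ₁, hμ₁dm, hμ₁mz, hμ₁zd⟩ := M.exists_isMedian d m₁ z
  obtain ⟨μ₂, hgμ₂dm, hμ₂mz, hμ₂zd⟩ := M.exists_isMedian d m₂ z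
  obtain ⟨g, hgμ, hgμ₂d, hgdμ₁⟩ := M.exists_isMedian μ₁ μ₂ d
  have hgA : g ∈ A := hAconv μ₁ (hAconv m₁ hm₁ z hzA hμ₁mz)
    μ₂ (hAconv m₂ hm₂ z hzA hμ₂mz) hgμ
  have hdx : d ∈ M.interval g x := mem_interval_of_mem_interval
    (mem_interval_of_mem_interval (mem_interval_comm hd₁) (mem_interval_comm hμ₁dm))
    (mem_interval_comm hgdμ₁)
  have hdy : d ∈ M.interval g y := mem_interval_of_mem_interval
    (mem_interval_of_mem_interval (mem_interval_comm hd₂) (mem_interval_comm hgμ₂dm)) hgμ₂d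
  have hdz : d ∈ M.interval g z := M.isConvex_setOf_mem_interval g d x hdx y hdy hz
  have hgz : g ∈ M.interval d z :=
    mem_interval_comm (M.isConvex_interval z d μ₁ hμ₁zd μ₂ hμ₂zd hgμ)
  exact hdA (eq_of_mem_interval_of_mem_interval hgz hdz ▸ hgA)

theorem exists_isHalfspace_of_notMem (hC : M.IsConvex C) (hne : C.Nonempty) (hd : d ∉ C) :
    ∃ H, M.IsHalfspace H ∧ C ⊆ H ∧ d ∉ H := by
  obtain ⟨A, hCA, hA⟩ := exists_maximal_isConvex hC hd
  exact ⟨A, ⟨hA.1.1, isConvex_compl_of_maximal hA (hne.mono hCA)⟩, hCA, hA.1.2⟩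

theorem IsConvex.preimage {X' : Type*} {M' : MedianAlgebra X'} {f : X → X'} {A : Set X'}
    (hA : M'.IsConvex A) (hf : IsMedianMorphism M M' f) : M.IsConvex (f ⁻¹' A) :=
  fun x hx y hy _ hz => hA _ hx _ hy (hf x y ⟨_, hz, rfl⟩)

end MedianAlgebra

/-- A map between median algebras is a median morphism if and only if the
preimage of every halfspace is a halfspace. -/
theorem stmt4 {X X' : Type*} (M : MedianAlgebra X) (M' : MedianAlgebra X') (f : X → X') :
    IsMedianMorphism M M' f ↔
      ∀ H' : Set X', M'.IsHalfspace H' → M.IsHalfspace (f ⁻¹' H') := by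
  refine ⟨fun hf H' hH' => ⟨hH'.1.preimage hf, hH'.2.preimage hf⟩, fun h x y => ?_⟩
  rintro _ ⟨z, hz, rfl⟩
  by_contra hfz
  obtain ⟨H, hH, hxyH, hzH⟩ := MedianAlgebra.exists_isHalfspace_of_notMem
    (M'.isConvex_interval (f x) (f y)) ⟨f x, M'.left_mem_interval (f x) (f y)⟩ hfz
  have hx : x ∈ f ⁻¹' H := hxyH (M'.left_mem_interval (f x) (f y))
  have hy : y ∈ f ⁻¹' H := hxyH (M'.right_mem_interval (f x) (f y))
  exact hzH ((h H hH).1 x hx y hy hz)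
end

section
/- In a median metric space, the median map is 1-Lipschitz in each variable with respect to the ℓ¹ product metric: if m is the median of x,y,z and m' is the median of x',y',z', then d(m,m') ≤ d(x,x') + d(y,y') + d(z,z'). -/
/-!
Medians are gates: if `m` is the median of `a, b, c` and `t` lies between `b` and `c`, then `m`
lies between `a` and `t`. Indeed, with `p` the median of `a, b, t`, the median of `a, p, c` is
also a median of `a, b, c`, hence equals `m`, and it lies between `a` and `p`, so between `a`
and `t`. For triples that differ only in their first entry, each median thus lies between the
other median and the opposite first entry, which forces `d(m, m') ≤ d(a, a')`; the general bound
follows by changing one entry at a time.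
-/

def IsMedianSpace (X : Type*) [MetricSpace X] : Prop :=
  ∀ x y z : X, ∃! m : X,
    dist x m + dist m y = dist x y ∧
    dist y m + dist m z = dist y z ∧
    dist z m + dist m x = dist z x

section

variable {X : Type*} [PseudoMetricSpace X]

def IsBetween (x t y : X) : Prop :=
  dist x t + dist t y = dist x y

def IsMedian (m x y z : X) : Prop :=
  IsBetween x m y ∧ IsBetween y m z ∧ IsBetween z m x

namespace IsBetween

variable {a b n t : X}

theorem symm (h : IsBetween a t b) : IsBetween b t a := by
  rw [IsBetween, dist_comm b t, dist_comm t a, dist_comm b a, add_comm]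
  exact h

theorem trans {m : X} (hn : IsBetween a n m) (hm : IsBetween a m b) : IsBetween a n b := by
  unfold IsBetween at *
  linarith [dist_triangle a n b, dist_triangle n m b]

end IsBetween

theorem IsMedian.rotate {a b c m : X} (h : IsMedian m a b c) : IsMedian m b c a :=
  ⟨h.2.1, h.2.2, h.1⟩

end

namespace IsMedian

variable {X : Type*} [MetricSpace X] {a b c m : X}

theorem unique (hX : IsMedianSpace X) {n : X} (hm : IsMedian m a b c) (hn : IsMedian n a b c) :
    m = n :=
  (hX a b c).unique hm hn

theorem isBetween_of_isBetween (hX : IsMedianSpace X) {t : X} (hm : IsMedian m a b c)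
    (ht : IsBetween b t c) : IsBetween a m t := by
  obtain ⟨p, hp : IsMedian p a b t, -⟩ := hX a b t
  obtain ⟨q, hq : IsMedian q a p c, -⟩ := hX a p c
  have hp_bc : IsBetween b p c := hp.2.1.trans ht
  have hq_median : IsMedian q a b c :=
    ⟨hq.1.trans hp.1, (hq.2.1.symm.trans hp_bc.symm).symm, hq.2.2⟩
  rw [hm.unique hX hq_median]
  exact hq.1.trans hp.2.2.symm

theorem dist_le_of_left (hX : IsMedianSpace X) {a' m' : X} (hm : IsMedian m a b c)
    (hm' : IsMedian m' a' b c) : dist m m' ≤ dist a a' := by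
  have h : IsBetween a m m' := hm.isBetween_of_isBetween hX hm'.2.1
  have h' : IsBetween a' m' m := hm'.isBetween_of_isBetween hX hm.2.1
  unfold IsBetween at h h'
  linarith [dist_triangle a a' m', dist_triangle a' a m, dist_comm m m', dist_comm a a']

end IsMedian

/-- In a median metric space, the median map is 1-Lipschitz for the ℓ¹
product metric: `d(m,m') ≤ d(x,x') + d(y,y') + d(z,z')`. -/
theorem stmt10 {X : Type*} [MetricSpace X] (hX : IsMedianSpace X)
    (x y z m x' y' z' m' : X)
    (hm : dist x m + dist m y = dist x y ∧
          dist y m + dist m z = dist y z ∧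
          dist z m + dist m x = dist z x)
    (hm' : dist x' m' + dist m' y' = dist x' y' ∧
           dist y' m' + dist m' z' = dist y' z' ∧
           dist z' m' + dist m' x' = dist z' x') :
    dist m m' ≤ dist x x' + dist y y' + dist z z' := by
  change IsMedian m x y z at hm
  change IsMedian m' x' y' z' at hm'
  obtain ⟨m₁, hm₁ : IsMedian m₁ x' y z, -⟩ := hX x' y z
  obtain ⟨m₂, hm₂ : IsMedian m₂ x' y' z, -⟩ := hX x' y' z
  have h₁ : dist m m₁ ≤ dist x x' := hm.dist_le_of_left hX hm₁
  have h₂ : dist m₁ m₂ ≤ dist y y' := hm₁.rotate.dist_le_of_left hX hm₂.rotate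
  have h₃ : dist m₂ m' ≤ dist z z' :=
    hm₂.rotate.rotate.dist_le_of_left hX hm'.rotate.rotate
  linarith [dist_triangle m m₁ m', dist_triangle m₁ m₂ m']
end
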